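/- arXiv:2208.04985 — 2 statements merged into one kernel-verified Lean document; each statement's English description precedes it below -/
import Mathlib

section
/- Let p₀ ∈ (0,1) be the unique maximizer on [0,1] of p ↦ (1−F(p))·(p−μ) (equivalently, the unique solution of ψ(p₀) = μ), and let p₁ be any maximizer on [0,1] of p ↦ (1−F(p))·𝒢(p). Then p₁ < p₀. -/
open MeasureTheory

/-- `F(x) = ∫₀^x f`, with the convention that it is `0` for `x ≤ 0`. -/
noncomputable def cdf (f : ℝ → ℝ) (x : ℝ) : ℝ := ∫ t in Set.Ioc (0:ℝ) x, f t

/-- `𝒢(x) = ∫₀^x G(y) dy`, the left-hand integral of the cdf of `g` (`= 0` for `x ≤ 0`). -/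
noncomputable def calG (g : ℝ → ℝ) (x : ℝ) : ℝ := ∫ y in Set.Ioc (0:ℝ) x, cdf g y

/-- `μ = ∫₀¹ ω g(ω) dω`, the mean cost. -/
noncomputable def muG (g : ℝ → ℝ) : ℝ := ∫ t in Set.Ioc (0:ℝ) 1, t * g t

/-- The virtual valuation `ψ(θ) = θ − (1 − F(θ))/f(θ)`. -/
noncomputable def psi (f : ℝ → ℝ) (θ : ℝ) : ℝ := θ - (1 - cdf f θ) / f θ

/-!
Write `Π(p) = (1 - F(p)) 𝒢(p)`. Integration by parts gives `𝒢(1) = 1 - μ`, and `𝒢` grows with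
slope `G < 1` on `[0, 1)`, so `𝒢(p) > p - μ` for `p < 1`. Since `ψ(p₀) = μ` says
`1 - F(p₀) = f(p₀) (p₀ - μ)`, we get `Π'(p₀) = f(p₀) ((p₀ - μ) G(p₀) - 𝒢(p₀)) < 0`, so `p₀` is not a
maximiser of `Π`. For `p > p₀` the same two facts give `𝒢(p) / (p - μ) < 𝒢(p₀) / (p₀ - μ)`, and
multiplying by `(1 - F(p)) (p - μ) < (1 - F(p₀)) (p₀ - μ)` yields `Π(p) < Π(p₀)`.
-/

open Set

theorem intervalIntegral_pos_of_ae_pos {f : ℝ → ℝ} {a b : ℝ} (hab : a < b)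
    (hf : IntervalIntegrable f volume a b) (hpos : ∀ᵐ t, t ∈ Ioc a b → 0 < f t) :
    0 < ∫ t in a..b, f t := by
  have hnonneg : 0 ≤ᵐ[volume.restrict (uIoc a b)] f := by
    rw [uIoc_of_le hab.le]
    exact (ae_restrict_iff' measurableSet_Ioc).2 (hpos.mono fun t ht h => (ht h).le)
  rw [intervalIntegral.integral_pos_iff_support_of_nonneg_ae' hnonneg hf]
  refine ⟨hab, ?_⟩
  calc (0 : ENNReal) < volume (Ioc a b) := by simpa using hab
    _ ≤ volume (Function.support f ∩ Ioc a b) :=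
      measure_mono_ae (hpos.mono fun t ht h => ⟨(ht h).ne', h⟩)

theorem integral_primitive_eq_mul_sub_integral_mul {g : ℝ → ℝ} {a b : ℝ}
    (hg : IntervalIntegrable g volume a b) :
    ∫ y in a..b, (∫ t in a..y, g t) = b * (∫ t in a..b, g t) - ∫ t in a..b, t * g t := by
  have hG := hg.absolutelyContinuousOnInterval_intervalIntegral (c := a) left_mem_uIcc
  have hid : AbsolutelyContinuousOnInterval id a b :=
    (LipschitzWith.id.lipschitzOnWith).absolutelyContinuousOnInterval
  have key := hG.integral_mul_deriv_eq_deriv_mul hid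
  simp only [deriv_id, mul_one, id, intervalIntegral.integral_same, zero_mul, sub_zero] at key
  rw [key, mul_comm]
  congr 1
  refine intervalIntegral.integral_congr_ae ?_
  filter_upwards [hg.ae_hasDerivAt_integral] with t ht htab
  rw [(ht (uIoc_subset_uIcc htab) a left_mem_uIcc).deriv, mul_comm]

section Primitive

variable {g : ℝ → ℝ} {a b x : ℝ}

theorem cdf_eq_intervalIntegral (hx : 0 ≤ x) : cdf g x = ∫ t in 0..x, g t :=
  (intervalIntegral.integral_of_le hx).symm

theorem calG_eq_intervalIntegral (hx : 0 ≤ x) : calG g x = ∫ y in 0..x, cdf g y :=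
  (intervalIntegral.integral_of_le hx).symm

variable (hg : IntegrableOn g (Icc 0 1))
include hg

theorem intervalIntegrable_of_mem_Icc (ha : a ∈ Icc (0:ℝ) 1) (hb : b ∈ Icc (0:ℝ) 1) :
    IntervalIntegrable g volume a b :=
  (hg.mono_set (uIcc_subset_Icc ha hb)).intervalIntegrable

theorem cdf_sub_cdf (ha : 0 ≤ a) (hab : a ≤ b) (hb : b ≤ 1) :
    cdf g b - cdf g a = ∫ t in a..b, g t := by
  rw [cdf_eq_intervalIntegral ha, cdf_eq_intervalIntegral (ha.trans hab),
    intervalIntegral.integral_interval_sub_left]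
  · exact intervalIntegrable_of_mem_Icc hg ⟨le_rfl, zero_le_one⟩ ⟨ha.trans hab, hb⟩
  · exact intervalIntegrable_of_mem_Icc hg ⟨le_rfl, zero_le_one⟩ ⟨ha, hab.trans hb⟩

theorem cdf_lt_one (hpos : ∀ᵐ t, t ∈ Icc (0:ℝ) 1 → 0 < g t) (hone : cdf g 1 = 1)
    (hx0 : 0 ≤ x) (hx1 : x < 1) : cdf g x < 1 := by
  have := intervalIntegral_pos_of_ae_pos hx1
    (intervalIntegrable_of_mem_Icc hg ⟨hx0, hx1.le⟩ ⟨zero_le_one, le_rfl⟩)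
    (hpos.mono fun t ht h => ht ⟨hx0.trans h.1.le, h.2⟩)
  linarith [cdf_sub_cdf hg hx0 hx1.le le_rfl]

theorem cdf_le_one (hpos : ∀ᵐ t, t ∈ Icc (0:ℝ) 1 → 0 < g t) (hone : cdf g 1 = 1)
    (hx0 : 0 ≤ x) (hx1 : x ≤ 1) : cdf g x ≤ 1 :=
  hx1.lt_or_eq.elim (fun h => (cdf_lt_one hg hpos hone hx0 h).le) (fun h => h ▸ hone.le)

theorem continuousOn_cdf : ContinuousOn (cdf g) (Icc 0 1) := by
  have := intervalIntegral.continuousOn_primitive_interval (a := 0) (b := 1)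
    (by rwa [uIcc_of_le zero_le_one])
  rw [uIcc_of_le zero_le_one] at this
  exact this.congr fun x hx => cdf_eq_intervalIntegral hx.1

theorem intervalIntegrable_cdf (ha : a ∈ Icc (0:ℝ) 1) (hb : b ∈ Icc (0:ℝ) 1) :
    IntervalIntegrable (cdf g) volume a b :=
  ((continuousOn_cdf hg).mono (uIcc_subset_Icc ha hb)).intervalIntegrable

theorem calG_sub_calG_lt (hpos : ∀ᵐ t, t ∈ Icc (0:ℝ) 1 → 0 < g t) (hone : cdf g 1 = 1)
    (ha : 0 ≤ a) (hab : a < b) (hb : b ≤ 1) : calG g b - calG g a < b - a := by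
  have hGab := intervalIntegrable_cdf hg ⟨ha, hab.le.trans hb⟩ ⟨ha.trans hab.le, hb⟩
  have hgap : 0 < ∫ y in a..b, (1 - cdf g y) :=
    intervalIntegral.intervalIntegral_pos_of_pos_on (intervalIntegrable_const.sub hGab)
      (fun y hy => sub_pos.2 (cdf_lt_one hg hpos hone (ha.trans hy.1.le) (hy.2.trans_le hb)))
      hab
  rw [intervalIntegral.integral_sub intervalIntegrable_const hGab,
    intervalIntegral.integral_const, smul_eq_mul, mul_one] at hgap
  rw [calG_eq_intervalIntegral (ha.trans hab.le), calG_eq_intervalIntegral ha,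
    intervalIntegral.integral_interval_sub_left
      (intervalIntegrable_cdf hg ⟨le_rfl, zero_le_one⟩ ⟨ha.trans hab.le, hb⟩)
      (intervalIntegrable_cdf hg ⟨le_rfl, zero_le_one⟩ ⟨ha, hab.le.trans hb⟩)]
  linarith

theorem calG_one (hone : cdf g 1 = 1) : calG g 1 = 1 - muG g := by
  have hg01 := intervalIntegrable_of_mem_Icc hg ⟨le_rfl, zero_le_one⟩ ⟨zero_le_one, le_rfl⟩
  rw [calG_eq_intervalIntegral zero_le_one,
    intervalIntegral.integral_congr fun y hy => cdf_eq_intervalIntegral (g := g) ?_,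
    integral_primitive_eq_mul_sub_integral_mul hg01, ← cdf_eq_intervalIntegral zero_le_one, hone,
    muG, intervalIntegral.integral_of_le zero_le_one, one_mul]
  rw [uIcc_of_le zero_le_one] at hy
  exact hy.1

theorem hasDerivAt_cdf (hx : x ∈ Ioo (0:ℝ) 1) (hcont : ContinuousAt g x) :
    HasDerivAt (cdf g) (g x) x := by
  have hprim := intervalIntegral.integral_hasDerivAt_right
    (intervalIntegrable_of_mem_Icc hg ⟨le_rfl, zero_le_one⟩ (Ioo_subset_Icc_self hx))
    ⟨Icc 0 1, Icc_mem_nhds hx.1 hx.2, hg.aestronglyMeasurable⟩ hcont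
  exact hprim.congr_of_eventuallyEq <|
    Filter.eventually_of_mem (Ioi_mem_nhds hx.1) fun u hu => cdf_eq_intervalIntegral (le_of_lt hu)

theorem hasDerivAt_calG (hx : x ∈ Ioo (0:ℝ) 1) : HasDerivAt (calG g) (cdf g x) x :=
  hasDerivAt_cdf (continuousOn_cdf hg).integrableOn_Icc hx
    ((continuousOn_cdf hg).continuousAt (Icc_mem_nhds hx.1 hx.2))

theorem sub_muG_lt_calG (hpos : ∀ᵐ t, t ∈ Icc (0:ℝ) 1 → 0 < g t) (hone : cdf g 1 = 1)
    (hx0 : 0 ≤ x) (hx1 : x < 1) : x - muG g < calG g x := by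
  linarith [calG_sub_calG_lt hg hpos hone hx0 hx1 le_rfl, calG_one hg hone]

end Primitive

theorem one_sub_cdf_eq_of_psi_eq {f : ℝ → ℝ} {x m : ℝ} (hfx : f x ≠ 0) (h : psi f x = m) :
    1 - cdf f x = f x * (x - m) := by
  rw [← h, psi]
  field_simp
  ring

section Profit

variable {f g : ℝ → ℝ} {p₀ : ℝ}
  (hf_cont : ContinuousOn f (Icc 0 1)) (hf_pos : ∀ t ∈ Icc (0:ℝ) 1, 0 < f t)
  (hf_one : cdf f 1 = 1) (hp₀ : p₀ ∈ Ioo (0:ℝ) 1) (hp₀psi : psi f p₀ = muG g)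
include hf_cont hf_pos hf_one hp₀ hp₀psi

theorem muG_lt_of_psi_eq : muG g < p₀ := by
  have hfp₀ := hf_pos p₀ (Ioo_subset_Icc_self hp₀)
  have hF₀ := cdf_lt_one hf_cont.integrableOn_Icc (ae_of_all _ hf_pos) hf_one hp₀.1.le hp₀.2
  nlinarith [one_sub_cdf_eq_of_psi_eq hfp₀.ne' hp₀psi]

variable (hg_int : IntegrableOn g (Icc 0 1)) (hg_ae : ∀ᵐ t, t ∈ Icc (0:ℝ) 1 → 0 < g t)
  (hg_one : cdf g 1 = 1)
include hg_int hg_ae hg_one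

theorem not_isLocalMax_one_sub_cdf_mul_calG :
    ¬ IsLocalMax (fun p => (1 - cdf f p) * calG g p) p₀ := by
  intro hmax
  have hfp₀ := hf_pos p₀ (Ioo_subset_Icc_self hp₀)
  have hF' := hasDerivAt_cdf hf_cont.integrableOn_Icc hp₀
    (hf_cont.continuousAt (Icc_mem_nhds hp₀.1 hp₀.2))
  have hzero := hmax.hasDerivAt_eq_zero ((hF'.const_sub 1).mul (hasDerivAt_calG hg_int hp₀))
  rw [one_sub_cdf_eq_of_psi_eq hfp₀.ne' hp₀psi] at hzero
  have hfoc : (p₀ - muG g) * cdf g p₀ = calG g p₀ := by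
    have : f p₀ * ((p₀ - muG g) * cdf g p₀ - calG g p₀) = 0 := by linarith
    linarith [(mul_eq_zero.1 this).resolve_left hfp₀.ne']
  have hμ := muG_lt_of_psi_eq hf_cont hf_pos hf_one hp₀ hp₀psi
  nlinarith [cdf_le_one hg_int hg_ae hg_one hp₀.1.le hp₀.2.le,
    sub_muG_lt_calG hg_int hg_ae hg_one hp₀.1.le hp₀.2]

theorem one_sub_cdf_mul_calG_lt_of_lt (hp₀max : ∀ q ∈ Icc (0:ℝ) 1, q ≠ p₀ →
      (1 - cdf f q) * (q - muG g) < (1 - cdf f p₀) * (p₀ - muG g))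
    {p : ℝ} (hp : p₀ < p) (hp1 : p ≤ 1) :
    (1 - cdf f p) * calG g p < (1 - cdf f p₀) * calG g p₀ := by
  have hμ := muG_lt_of_psi_eq hf_cont hf_pos hf_one hp₀ hp₀psi
  have hcalG₀ := sub_muG_lt_calG hg_int hg_ae hg_one hp₀.1.le hp₀.2
  have hratio : (p₀ - muG g) * calG g p ≤ (p - muG g) * calG g p₀ := by
    nlinarith [calG_sub_calG_lt hg_int hg_ae hg_one hp₀.1.le hp hp1]
  have hFp : 0 ≤ 1 - cdf f p := sub_nonneg.2 <|
    cdf_le_one hf_cont.integrableOn_Icc (ae_of_all _ hf_pos) hf_one (hp₀.1.trans hp).le hp1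
  have hfixed := hp₀max p ⟨(hp₀.1.trans hp).le, hp1⟩ hp.ne'
  refine lt_of_mul_lt_mul_left ?_ (sub_pos.2 hμ).le
  calc (p₀ - muG g) * ((1 - cdf f p) * calG g p)
      = (1 - cdf f p) * ((p₀ - muG g) * calG g p) := by ring
    _ ≤ (1 - cdf f p) * ((p - muG g) * calG g p₀) := mul_le_mul_of_nonneg_left hratio hFp
    _ = ((1 - cdf f p) * (p - muG g)) * calG g p₀ := by ring
    _ < ((1 - cdf f p₀) * (p₀ - muG g)) * calG g p₀ :=
      mul_lt_mul_of_pos_right hfixed (by linarith)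
    _ = (p₀ - muG g) * ((1 - cdf f p₀) * calG g p₀) := by ring

end Profit

theorem stmt5_general
    (f g : ℝ → ℝ)
    (hg_int : IntegrableOn g (Set.Icc 0 1))
    (hg_ae : ∀ᵐ t, t ∈ Set.Icc (0:ℝ) 1 → 0 < g t)
    (hf_one : cdf f 1 = 1)
    (hg_one : cdf g 1 = 1)
    (hf_cont : ContinuousOn f (Set.Icc 0 1))
    (hf_pos : ∀ t ∈ Set.Icc (0:ℝ) 1, 0 < f t)
    (p₀ : ℝ) (hp₀ : p₀ ∈ Set.Ioo (0:ℝ) 1) (hp₀psi : psi f p₀ = muG g)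
    (hp₀max : ∀ q ∈ Set.Icc (0:ℝ) 1, q ≠ p₀ →
      (1 - cdf f q) * (q - muG g) < (1 - cdf f p₀) * (p₀ - muG g))
    (p₁ : ℝ) (hp₁ : p₁ ∈ Set.Icc (0:ℝ) 1)
    (hp₁max : ∀ q ∈ Set.Icc (0:ℝ) 1, (1 - cdf f q) * calG g q ≤ (1 - cdf f p₁) * calG g p₁) :
    p₁ < p₀ := by
  rcases lt_trichotomy p₁ p₀ with hlt | rfl | hgt
  · exact hlt
  · exact absurd (Filter.eventually_of_mem (Icc_mem_nhds hp₀.1 hp₀.2) hp₁max)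
      (not_isLocalMax_one_sub_cdf_mul_calG hf_cont hf_pos hf_one hp₀ hp₀psi hg_int hg_ae hg_one)
  · exact absurd (hp₁max p₀ (Ioo_subset_Icc_self hp₀)) <| not_le.2 <|
      one_sub_cdf_mul_calG_lt_of_lt hf_cont hf_pos hf_one hp₀ hp₀psi hg_int hg_ae hg_one hp₀max
        hgt hp₁.2

/-- if `p₀ ∈ (0,1)` is the unique maximizer of the ex-ante fixed-price profit
(equivalently, the unique solution of `ψ(p₀) = μ`), and `p₁` is any maximizer of the
ex-ante at-will posted-price profit `p ↦ (1−F(p))·𝒢(p)` on `[0,1]`, then `p₁ < p₀`. -/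
theorem stmt5
    (f g : ℝ → ℝ)
    (hf_int : IntegrableOn f (Set.Icc 0 1))
    (hg_int : IntegrableOn g (Set.Icc 0 1))
    (hf_ae : ∀ᵐ t, t ∈ Set.Icc (0:ℝ) 1 → 0 < f t)
    (hg_ae : ∀ᵐ t, t ∈ Set.Icc (0:ℝ) 1 → 0 < g t)
    (hf_one : cdf f 1 = 1)
    (hg_one : cdf g 1 = 1)
    (hf_cont : ContinuousOn f (Set.Icc 0 1))
    (hf_pos : ∀ t ∈ Set.Icc (0:ℝ) 1, 0 < f t)
    (hpsi_mono : StrictMonoOn (psi f) (Set.Icc 0 1))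
    (p₀ : ℝ) (hp₀ : p₀ ∈ Set.Ioo (0:ℝ) 1) (hp₀psi : psi f p₀ = muG g)
    (hp₀max : ∀ q ∈ Set.Icc (0:ℝ) 1, q ≠ p₀ →
      (1 - cdf f q) * (q - muG g) < (1 - cdf f p₀) * (p₀ - muG g))
    (p₁ : ℝ) (hp₁ : p₁ ∈ Set.Icc (0:ℝ) 1)
    (hp₁max : ∀ q ∈ Set.Icc (0:ℝ) 1, (1 - cdf f q) * calG g q ≤ (1 - cdf f p₁) * calG g p₁) :
    p₁ < p₀ :=
  stmt5_general f g hg_int hg_ae hf_one hg_one hf_cont hf_pos p₀ hp₀ hp₀psi hp₀max p₁ hp₁ hp₁max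
end

section
/- With p(ω) denoting, for each ω ∈ [0,1), the unique solution in [θ*,1) of ψ(p(ω)) = ω, the expected ex-post optimal posted-price profit satisfies the identity ∫₀¹ (1−F(p(ω)))·(p(ω)−ω) g(ω) dω = ∫_{θ*}^1 𝒢(ψ(θ)) f(θ) dθ. -/
/-! For a cost `ω` the profit `(1 - F(p))(p - ω)` equals `∫_p^1 (ψ(θ) - ω) f(θ) dθ`, because
`(ψ(θ) - ω) f(θ)` is the derivative of `(θ - ω)(F(θ) - 1)`; since `ψ` is increasing with
`ψ(p) = ω`, this is `∫_{θ*}^1 (ψ(θ) - ω)⁺ f(θ) dθ`. Integrating against `g(ω)` and exchanging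
the order of integration gives `∫_{θ*}^1 f(θ) ∫₀¹ (ψ(θ) - ω)⁺ g(ω) dω dθ`, and the inner integral
is `𝒢(ψ(θ))` by Fubini once more, on the triangle `0 < ω ≤ y ≤ ψ(θ)`. -/

open MeasureTheory Set

section Cdf

variable {f : ℝ → ℝ} {b : ℝ}

lemma continuousOn_cdf_s8 (hf : IntegrableOn f (Icc 0 b)) : ContinuousOn (cdf f) (Icc 0 b) :=
  intervalIntegral.continuousOn_primitive hf

lemma hasDerivAt_cdf_s8 (hf : IntegrableOn f (Icc 0 b)) {θ : ℝ} (hθ : θ ∈ Ioo 0 b)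
    (hcont : ContinuousAt f θ) : HasDerivAt (cdf f) (f θ) θ := by
  have hint : IntervalIntegrable f volume 0 θ :=
    (intervalIntegrable_iff_integrableOn_Ioc_of_le hθ.1.le).2
      (hf.mono_set (Ioc_subset_Icc_self.trans (Icc_subset_Icc_right hθ.2.le)))
  have hmeas : StronglyMeasurableAtFilter f (nhds θ) :=
    ⟨Icc 0 b, Icc_mem_nhds hθ.1 hθ.2, hf.aestronglyMeasurable⟩
  refine (intervalIntegral.integral_hasDerivAt_right hint hmeas hcont).congr_of_eventuallyEq ?_
  filter_upwards [Ioi_mem_nhds hθ.1] with x hx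
  exact (intervalIntegral.integral_of_le hx.le).symm

end Cdf

lemma psi_one {f : ℝ → ℝ} (hf_one : cdf f 1 = 1) : psi f 1 = 1 := by
  simp [psi, hf_one]

lemma continuousOn_psi {f : ℝ → ℝ} (hf_int : IntegrableOn f (Icc 0 1))
    (hf_cont : ContinuousOn f (Icc 0 1)) (hf_ne : ∀ t ∈ Icc (0:ℝ) 1, f t ≠ 0) :
    ContinuousOn (psi f) (Icc 0 1) :=
  (continuousOn_id' _).sub
    ((continuousOn_const.sub (continuousOn_cdf_s8 hf_int)).div hf_cont hf_ne)

lemma integral_psi_sub_mul {f : ℝ → ℝ} {q : ℝ} (hf_int : IntegrableOn f (Icc 0 1))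
    (hf_cont : ContinuousOn f (Icc q 1)) (hf_ne : ∀ θ ∈ Icc q 1, f θ ≠ 0)
    (hf_one : cdf f 1 = 1) (hq0 : 0 ≤ q) (hq1 : q ≤ 1) (ω : ℝ) :
    ∫ θ in q..1, (psi f θ - ω) * f θ = (1 - cdf f q) * (q - ω) := by
  have hF : ContinuousOn (cdf f) (Icc q 1) :=
    (continuousOn_cdf_s8 hf_int).mono (Icc_subset_Icc_left hq0)
  have hintegrand : EqOn (fun θ => (psi f θ - ω) * f θ)
      (fun θ => (cdf f θ - 1) + (θ - ω) * f θ) (uIcc q 1) := by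
    intro θ hθ
    rw [uIcc_of_le hq1] at hθ
    have := hf_ne θ hθ
    simp only [psi]
    field_simp
    ring
  have hderiv : ∀ θ ∈ Ioo q 1, HasDerivAt (fun θ => (θ - ω) * (cdf f θ - 1))
      ((cdf f θ - 1) + (θ - ω) * f θ) θ := by
    intro θ hθ
    have hF' := hasDerivAt_cdf_s8 hf_int ⟨hq0.trans_lt hθ.1, hθ.2⟩
      (hf_cont.continuousAt (Icc_mem_nhds hθ.1 hθ.2))
    exact (((hasDerivAt_id' θ).sub_const ω).fun_mul (hF'.sub_const 1)).congr_deriv (by ring)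
  have hint : IntervalIntegrable (fun θ => (cdf f θ - 1) + (θ - ω) * f θ) volume q 1 :=
    ((hF.sub continuousOn_const).add
      ((continuousOn_id.sub continuousOn_const).mul hf_cont)).intervalIntegrable_of_Icc hq1
  have hcont : ContinuousOn (fun θ => (θ - ω) * (cdf f θ - 1)) (Icc q 1) :=
    ((continuousOn_id' _).sub continuousOn_const).mul (hF.sub continuousOn_const)
  rw [intervalIntegral.integral_congr hintegrand,
    intervalIntegral.integral_eq_sub_of_hasDerivAt_of_le hq1 hcont hderiv hint, hf_one]
  ring

lemma setIntegral_max_sub_mul_eq {φ h : ℝ → ℝ} {a b q ω : ℝ} (hφ : MonotoneOn φ (Icc a b))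
    (hq : q ∈ Icc a b) (hφq : φ q = ω) :
    ∫ θ in Ioc a b, max (φ θ - ω) 0 * h θ = ∫ θ in q..b, (φ θ - ω) * h θ := by
  have hEq : EqOn (fun θ => max (φ θ - ω) 0 * h θ)
      ((Ioi q).indicator fun θ => (φ θ - ω) * h θ) (Ioc a b) := by
    intro θ hθ
    rcases le_or_gt θ q with hθq | hqθ
    · have : φ θ ≤ ω := hφq ▸ hφ (Ioc_subset_Icc_self hθ) hq hθq
      simp [indicator_of_notMem (notMem_Ioi.2 hθq), this]
    · have : ω ≤ φ θ := hφq ▸ hφ hq (Ioc_subset_Icc_self hθ) hqθ.le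
      simp [indicator_of_mem (mem_Ioi.2 hqθ), this]
  rw [setIntegral_congr_fun measurableSet_Ioc hEq, integral_indicator measurableSet_Ioi,
    Measure.restrict_restrict measurableSet_Ioi, inter_comm, Ioc_inter_Ioi, sup_eq_right.2 hq.1,
    intervalIntegral.integral_of_le hq.2]

lemma calG_eq_setIntegral_mul_max {g : ℝ → ℝ} (hg : IntegrableOn g (Ioc 0 1)) {x : ℝ}
    (hx : x ≤ 1) : calG g x = ∫ ω in Ioc 0 1, g ω * max (x - ω) 0 := by
  set H : ℝ × ℝ → ℝ := {q | q.2 ≤ q.1}.indicator fun q => g q.2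
  have hH : Integrable H ((volume.restrict (Ioc 0 x)).prod (volume.restrict (Ioc 0 1))) :=
    (hg.comp_snd _).indicator (measurableSet_le measurable_snd measurable_fst)
  calc calG g x = ∫ y in Ioc 0 x, ∫ ω in Ioc 0 1, H (y, ω) := by
        refine setIntegral_congr_fun measurableSet_Ioc fun y hy => ?_
        change cdf g y = ∫ ω in Ioc 0 1, (Iic y).indicator g ω
        rw [integral_indicator measurableSet_Iic, Measure.restrict_restrict measurableSet_Iic,
          Iic_inter_Ioc_of_le (hy.2.trans hx), cdf]
    _ = ∫ ω in Ioc 0 1, ∫ y in Ioc 0 x, H (y, ω) := integral_integral_swap hH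
    _ = ∫ ω in Ioc 0 1, g ω * max (x - ω) 0 := by
        refine setIntegral_congr_fun measurableSet_Ioc fun ω hω => ?_
        have : Ici ω ∩ Ioc 0 x = Icc ω x := by
          ext y
          simp only [mem_inter_iff, mem_Ici, mem_Ioc, mem_Icc]
          constructor
          · exact fun h => ⟨h.1, h.2.2⟩
          · exact fun h => ⟨h.1, hω.1.trans_le h.1, h.2⟩
        change ∫ y in Ioc 0 x, (Ici ω).indicator (fun _ => g ω) y = _
        rw [integral_indicator measurableSet_Ici, Measure.restrict_restrict measurableSet_Ici,
          this, setIntegral_const, Real.volume_real_Icc, smul_eq_mul, mul_comm]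

lemma integrable_max_sub_mul_prod {φ f g : ℝ → ℝ} {s : Set ℝ} (hs : MeasurableSet s)
    (hφ : AEStronglyMeasurable φ (volume.restrict s)) (hφ_le : ∀ θ ∈ s, φ θ ≤ 1)
    (hf : IntegrableOn f s) (hg : IntegrableOn g (Ioc 0 1)) :
    Integrable (fun z : ℝ × ℝ => max (φ z.1 - z.2) 0 * (f z.1 * g z.2))
      ((volume.restrict s).prod (volume.restrict (Ioc 0 1))) := by
  refine (hf.mul_prod hg).bdd_mul (c := 1)
    ((hφ.comp_fst.sub measurable_snd.aestronglyMeasurable).sup aestronglyMeasurable_const) ?_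
  have hmem : ∀ᵐ z ∂(volume.restrict s).prod (volume.restrict (Ioc 0 1)),
      z ∈ s ×ˢ Ioc (0:ℝ) 1 := by
    rw [Measure.prod_restrict]
    exact ae_restrict_mem (hs.prod measurableSet_Ioc)
  filter_upwards [hmem] with z hz
  rw [Real.norm_of_nonneg (le_max_right _ _)]
  exact max_le (by linarith [hφ_le z.1 hz.1, hz.2.1]) zero_le_one

theorem stmt8_general
    (f g : ℝ → ℝ)
    (hf_int : IntegrableOn f (Set.Icc 0 1))
    (hg_int : IntegrableOn g (Set.Icc 0 1))
    (hf_one : cdf f 1 = 1)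
    (hf_cont : ContinuousOn f (Set.Icc 0 1))
    (hf_pos : ∀ t ∈ Set.Icc (0:ℝ) 1, 0 < f t)
    (hpsi_mono : StrictMonoOn (psi f) (Set.Icc 0 1))
    (θs : ℝ) (hθs : θs ∈ Set.Ioo (0:ℝ) 1) (hθs0 : psi f θs = 0)
    (p : ℝ → ℝ)
    (hp : ∀ ω ∈ Set.Ico (0:ℝ) 1, p ω ∈ Set.Ico θs 1 ∧ psi f (p ω) = ω) :
    (∫ ω in (0:ℝ)..1, (1 - cdf f (p ω)) * (p ω - ω) * g ω) =
      ∫ θ in θs..1, calG g (psi f θ) * f θ := by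
  have hsub : Icc θs 1 ⊆ Icc 0 1 := Icc_subset_Icc_left hθs.1.le
  have hf_ne : ∀ t ∈ Icc (0:ℝ) 1, f t ≠ 0 := fun t ht => (hf_pos t ht).ne'
  have hmono : MonotoneOn (psi f) (Icc θs 1) := hpsi_mono.monotoneOn.mono hsub
  have hpsi_mem : ∀ θ ∈ Icc θs 1, psi f θ ∈ Icc 0 1 := fun θ hθ =>
    ⟨hθs0 ▸ hmono (left_mem_Icc.2 hθs.2.le) hθ hθ.1,
      psi_one hf_one ▸ hmono hθ (right_mem_Icc.2 hθs.2.le) hθ.2⟩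
  have hg : IntegrableOn g (Ioc 0 1) := hg_int.mono_set Ioc_subset_Icc_self
  have hIoc : Ioc θs 1 ⊆ Icc 0 1 := Ioc_subset_Icc_self.trans hsub
  have hK := integrable_max_sub_mul_prod measurableSet_Ioc
    (((continuousOn_psi hf_int hf_cont hf_ne).mono hIoc).aestronglyMeasurable measurableSet_Ioc)
    (fun θ hθ => (hpsi_mem θ (Ioc_subset_Icc_self hθ)).2) (hf_int.mono_set hIoc) hg
  calc (∫ ω in (0:ℝ)..1, (1 - cdf f (p ω)) * (p ω - ω) * g ω)
      = ∫ ω in Ioc 0 1, ∫ θ in Ioc θs 1, max (psi f θ - ω) 0 * (f θ * g ω) := by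
        rw [intervalIntegral.integral_of_le zero_le_one,
          Measure.restrict_congr_set Ioo_ae_eq_Ioc.symm]
        refine setIntegral_congr_fun measurableSet_Ioo fun ω hω => ?_
        obtain ⟨⟨hθs_le, hp_lt⟩, hpsi_p⟩ := hp ω (Ioo_subset_Ico_self hω)
        have hp0 : 0 ≤ p ω := hθs.1.le.trans hθs_le
        have hIcc : Icc (p ω) 1 ⊆ Icc 0 1 := Icc_subset_Icc_left hp0
        simp only [← mul_assoc]
        rw [integral_mul_const, setIntegral_max_sub_mul_eq hmono ⟨hθs_le, hp_lt.le⟩ hpsi_p,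
          integral_psi_sub_mul hf_int (hf_cont.mono hIcc) (fun θ hθ => hf_ne θ (hIcc hθ)) hf_one
            hp0 hp_lt.le]
    _ = ∫ θ in Ioc θs 1, ∫ ω in Ioc 0 1, max (psi f θ - ω) 0 * (f θ * g ω) :=
        (integral_integral_swap hK).symm
    _ = ∫ θ in θs..1, calG g (psi f θ) * f θ := by
        rw [intervalIntegral.integral_of_le hθs.2.le]
        refine setIntegral_congr_fun measurableSet_Ioc fun θ hθ => ?_
        rw [calG_eq_setIntegral_mul_max hg (hpsi_mem θ (Ioc_subset_Icc_self hθ)).2,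
          ← integral_mul_const]
        congr 1 with ω
        ring

/-- with `p(ω)` the unique solution in `[θ*,1)` of `ψ(p(ω)) = ω`, the expected
ex-post optimal posted-price profit satisfies
`∫₀¹ (1−F(p(ω)))·(p(ω)−ω) g(ω) dω = ∫_{θ*}^1 𝒢(ψ(θ)) f(θ) dθ`. -/
theorem stmt8
    (f g : ℝ → ℝ)
    (hf_int : IntegrableOn f (Set.Icc 0 1))
    (hg_int : IntegrableOn g (Set.Icc 0 1))
    (hf_ae : ∀ᵐ t, t ∈ Set.Icc (0:ℝ) 1 → 0 < f t)
    (hg_ae : ∀ᵐ t, t ∈ Set.Icc (0:ℝ) 1 → 0 < g t)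
    (hf_one : cdf f 1 = 1)
    (hg_one : cdf g 1 = 1)
    (hf_cont : ContinuousOn f (Set.Icc 0 1))
    (hf_pos : ∀ t ∈ Set.Icc (0:ℝ) 1, 0 < f t)
    (hpsi_mono : StrictMonoOn (psi f) (Set.Icc 0 1))
    (θs : ℝ) (hθs : θs ∈ Set.Ioo (0:ℝ) 1) (hθs0 : psi f θs = 0)
    (p : ℝ → ℝ)
    (hp : ∀ ω ∈ Set.Ico (0:ℝ) 1, p ω ∈ Set.Ico θs 1 ∧ psi f (p ω) = ω) :
    (∫ ω in (0:ℝ)..1, (1 - cdf f (p ω)) * (p ω - ω) * g ω) =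
      ∫ θ in θs..1, calG g (psi f θ) * f θ :=
  stmt8_general f g hf_int hg_int hf_one hf_cont hf_pos hpsi_mono θs hθs hθs0 p hp
end
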